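/- Golden–Thompson inequality: for any two Hermitian matrices H, K ∈ ℂ^{D×D}, tr(exp(H+K)) ≤ tr(exp(H)·exp(K)). -/

import Mathlib

open Matrix BigOperators
open scoped ComplexOrder

noncomputable def matFun {D : ℕ} (f : ℝ → ℝ) (A : Matrix (Fin D) (Fin D) ℂ) :
    Matrix (Fin D) (Fin D) ℂ :=
  if h : A.IsHermitian then
    (h.eigenvectorUnitary : Matrix (Fin D) (Fin D) ℂ) *
      Matrix.diagonal (fun i => (f (h.eigenvalues i) : ℂ)) *
      star (h.eigenvectorUnitary : Matrix (Fin D) (Fin D) ℂ)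
  else 0

noncomputable def matLog {D : ℕ} : Matrix (Fin D) (Fin D) ℂ → Matrix (Fin D) (Fin D) ℂ :=
  matFun Real.log

noncomputable def matExp {D : ℕ} : Matrix (Fin D) (Fin D) ℂ → Matrix (Fin D) (Fin D) ℂ :=
  matFun Real.exp

def IsDensity {D : ℕ} (ρ : Matrix (Fin D) (Fin D) ℂ) : Prop :=
  ρ.PosSemidef ∧ ρ.trace = 1

/-!
Lie's product formula gives `exp (H + K) = lim (exp (H / n) * exp (K / n)) ^ n`. Along `n = 2 ^ k`
the real part of the trace of these powers is at most `tr (exp H * exp K)` by the inequality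
`Re tr ((A * B) ^ 2 ^ k) ≤ Re tr (A ^ 2 ^ k * B ^ 2 ^ k)` for Hermitian `A`, `B`. The latter is
proved by induction on `k`, simultaneously with `Re tr (X ^ 2 ^ (k + 1)) ≤ Re tr ((Xᴴ * X) ^ 2 ^ k)`
for arbitrary `X`; the only inequality that enters is Cauchy–Schwarz for the Frobenius inner
product, in the form `2 Re tr (X * Y) ≤ tr (Xᴴ * X) + tr (Yᴴ * Y)`.

Lie's formula itself comes from telescoping `a ^ n - b ^ n` for `a = exp (x / n) * exp (y / n)` and
`b = exp ((x + y) / n)`: both factors have derivative `x + y` at `0`, so `a - b = o (1 / n)`.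
-/

open NormedSpace Filter Asymptotics
open scoped Topology

namespace Matrix

variable {n 𝕜 : Type*} [Fintype n] [RCLike 𝕜]

open RCLike

lemma re_trace_conjTranspose_mul_self_nonneg (X : Matrix n n 𝕜) : 0 ≤ re (Xᴴ * X).trace :=
  (RCLike.nonneg_iff.mp (posSemidef_conjTranspose_mul_self X).trace_nonneg).1

lemma two_mul_re_trace_mul_le (X Y : Matrix n n 𝕜) :
    2 * re (X * Y).trace ≤ re (Xᴴ * X).trace + re (Yᴴ * Y).trace := by
  have h := re_trace_conjTranspose_mul_self_nonneg (Xᴴ - Y)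
  have hYX : re (Yᴴ * Xᴴ).trace = re (X * Y).trace := by
    rw [← conjTranspose_mul, trace_conjTranspose, star_def, conj_re]
  rw [conjTranspose_sub, conjTranspose_conjTranspose, sub_mul, mul_sub, mul_sub,
    trace_sub, trace_sub, trace_sub, map_sub, map_sub, map_sub, hYX, trace_mul_comm X] at h
  linarith

variable [DecidableEq n]

lemma trace_mul_pow_comm {R : Type*} [CommSemiring R] (A B : Matrix n n R) (m : ℕ) :
    ((A * B) ^ m).trace = ((B * A) ^ m).trace := by
  cases m with
  | zero => simp
  | succ m =>
    rw [pow_succ, ← mul_assoc, mul_pow_mul, mul_assoc, trace_mul_comm, mul_assoc, ← pow_succ]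

lemma re_trace_sq_le (X : Matrix n n 𝕜) : re (X ^ 2).trace ≤ re (Xᴴ * X).trace := by
  rw [sq]
  linarith [two_mul_re_trace_mul_le X X]

lemma re_trace_mul_pow_two_mul_le {m : ℕ}
    (hsq : ∀ X : Matrix n n 𝕜, re (X ^ (2 * m)).trace ≤ re ((Xᴴ * X) ^ m).trace)
    (hmul : ∀ A B : Matrix n n 𝕜, A.IsHermitian → B.IsHermitian →
      re ((A * B) ^ m).trace ≤ re (A ^ m * B ^ m).trace)
    {A B : Matrix n n 𝕜} (hA : A.IsHermitian) (hB : B.IsHermitian) :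
    re ((A * B) ^ (2 * m)).trace ≤ re (A ^ (2 * m) * B ^ (2 * m)).trace := by
  have hAB : (A * B)ᴴ * (A * B) = B * (A * A * B) := by
    rw [conjTranspose_mul, hA.eq, hB.eq]
    noncomm_ring
  calc re ((A * B) ^ (2 * m)).trace
      ≤ re (((A * B)ᴴ * (A * B)) ^ m).trace := hsq (A * B)
    _ = re ((A * A * (B * B)) ^ m).trace := by
        rw [hAB, trace_mul_pow_comm, mul_assoc]
    _ ≤ re ((A * A) ^ m * (B * B) ^ m).trace :=
        hmul _ _ (by rw [← sq]; exact hA.pow 2) (by rw [← sq]; exact hB.pow 2)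
    _ = re (A ^ (2 * m) * B ^ (2 * m)).trace := by rw [← sq, ← sq, ← pow_mul, ← pow_mul]

lemma re_trace_pow_two_mul_two_mul_le {m : ℕ}
    (hsq : ∀ X : Matrix n n 𝕜, re (X ^ (2 * m)).trace ≤ re ((Xᴴ * X) ^ m).trace)
    (hmul : ∀ A B : Matrix n n 𝕜, A.IsHermitian → B.IsHermitian →
      re ((A * B) ^ m).trace ≤ re (A ^ m * B ^ m).trace)
    (X : Matrix n n 𝕜) :
    re (X ^ (2 * (2 * m))).trace ≤ re ((Xᴴ * X) ^ (2 * m)).trace := by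
  have hP : (Xᴴ * X).IsHermitian := isHermitian_conjTranspose_mul_self X
  have hQ : (X * Xᴴ).IsHermitian := isHermitian_mul_conjTranspose_self X
  have hX2 : (X ^ 2)ᴴ * X ^ 2 = Xᴴ * (Xᴴ * X * X) := by
    rw [conjTranspose_pow, sq, sq]
    noncomm_ring
  calc re (X ^ (2 * (2 * m))).trace
      = re ((X ^ 2) ^ (2 * m)).trace := by rw [← pow_mul]
    _ ≤ re (((X ^ 2)ᴴ * X ^ 2) ^ m).trace := hsq _
    _ = re ((Xᴴ * X * (X * Xᴴ)) ^ m).trace := by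
        rw [hX2, trace_mul_pow_comm]
        noncomm_ring
    _ ≤ re ((Xᴴ * X) ^ m * (X * Xᴴ) ^ m).trace := hmul _ _ hP hQ
    _ ≤ (re (((Xᴴ * X) ^ m)ᴴ * (Xᴴ * X) ^ m).trace
          + re (((X * Xᴴ) ^ m)ᴴ * (X * Xᴴ) ^ m).trace) / 2 := by
        linarith [two_mul_re_trace_mul_le ((Xᴴ * X) ^ m) ((X * Xᴴ) ^ m)]
    _ = re ((Xᴴ * X) ^ (2 * m)).trace := by
        rw [(hP.pow m).eq, (hQ.pow m).eq, ← pow_add, ← pow_add, ← two_mul,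
          trace_mul_pow_comm X]
        ring

theorem re_trace_mul_pow_two_pow_le (k : ℕ) {A B : Matrix n n 𝕜}
    (hA : A.IsHermitian) (hB : B.IsHermitian) :
    re ((A * B) ^ 2 ^ k).trace ≤ re (A ^ 2 ^ k * B ^ 2 ^ k).trace := by
  suffices ∀ k : ℕ,
      (∀ X : Matrix n n 𝕜, re (X ^ (2 * 2 ^ k)).trace ≤ re ((Xᴴ * X) ^ 2 ^ k).trace) ∧
      ∀ A B : Matrix n n 𝕜, A.IsHermitian → B.IsHermitian →
        re ((A * B) ^ 2 ^ k).trace ≤ re (A ^ 2 ^ k * B ^ 2 ^ k).trace from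
    (this k).2 A B hA hB
  intro k
  induction k with
  | zero => exact ⟨by simpa using re_trace_sq_le, by simp⟩
  | succ k ih =>
    rw [pow_succ']
    exact ⟨re_trace_pow_two_mul_two_mul_le ih.1 ih.2,
      fun A B hA hB => re_trace_mul_pow_two_mul_le ih.1 ih.2 hA hB⟩

end Matrix

section LieProductFormula

variable {𝔸 : Type*} [NormedRing 𝔸]

lemma norm_pow_succ_sub_pow_succ_le (a b : 𝔸) {C : ℝ} (ha : ‖a‖ ≤ C) (hb : ‖b‖ ≤ C) (n : ℕ) :
    ‖a ^ (n + 1) - b ^ (n + 1)‖ ≤ (n + 1) * C ^ n * ‖a - b‖ := by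
  have hC : 0 ≤ C := (norm_nonneg a).trans ha
  induction n with
  | zero => simp
  | succ n ih =>
    have hsplit : a ^ (n + 1 + 1) - b ^ (n + 1 + 1)
        = a ^ (n + 1) * (a - b) + (a ^ (n + 1) - b ^ (n + 1)) * b := by noncomm_ring
    have hpow : ‖a ^ (n + 1)‖ ≤ C ^ (n + 1) :=
      (norm_pow_le' a n.succ_pos).trans (pow_le_pow_left₀ (norm_nonneg a) ha _)
    calc ‖a ^ (n + 1 + 1) - b ^ (n + 1 + 1)‖
        ≤ ‖a ^ (n + 1)‖ * ‖a - b‖ + ‖a ^ (n + 1) - b ^ (n + 1)‖ * ‖b‖ := by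
          rw [hsplit]
          exact (norm_add_le _ _).trans (add_le_add (norm_mul_le _ _) (norm_mul_le _ _))
      _ ≤ C ^ (n + 1) * ‖a - b‖ + ((n + 1) * C ^ n * ‖a - b‖) * C := by gcongr
      _ = (↑(n + 1) + 1) * C ^ (n + 1) * ‖a - b‖ := by push_cast; ring

variable [NormedAlgebra ℝ 𝔸]

lemma norm_exp_le_exp_norm [NormOneClass 𝔸] (x : 𝔸) : ‖exp x‖ ≤ Real.exp ‖x‖ := by
  rw [exp_eq_tsum ℝ, Real.exp_eq_exp_ℝ, exp_eq_tsum_div]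
  refine (norm_tsum_le_tsum_norm (norm_expSeries_summable' x)).trans ?_
  refine Summable.tsum_le_tsum (fun k => ?_) (norm_expSeries_summable' x)
    (Real.summable_pow_div_factorial ‖x‖)
  rw [norm_smul, div_eq_inv_mul, Real.norm_of_nonneg (by positivity)]
  gcongr
  exact norm_pow_le x k

variable [CompleteSpace 𝔸]

lemma exp_inv_natCast_smul_pow {n : ℕ} (hn : n ≠ 0) (x : 𝔸) : exp ((n : ℝ)⁻¹ • x) ^ n = exp x := by
  let _ : NormedAlgebra ℚ 𝔸 := NormedAlgebra.restrictScalars ℚ ℝ 𝔸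
  rw [← NormedSpace.exp_nsmul, ← Nat.cast_smul_eq_nsmul ℝ, smul_smul,
    mul_inv_cancel₀ (Nat.cast_ne_zero.mpr hn), one_smul]

lemma isLittleO_exp_smul_mul_exp_smul_sub_exp_smul_add (x y : 𝔸) :
    (fun t : ℝ => exp (t • x) * exp (t • y) - exp (t • (x + y))) =o[𝓝 0] fun t => t := by
  have h := ((hasDerivAt_exp_smul_const (𝕂 := ℝ) x 0).mul
    (hasDerivAt_exp_smul_const (𝕂 := ℝ) y 0)).sub
    (hasDerivAt_exp_smul_const (𝕂 := ℝ) (x + y) 0)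
  simp only [zero_smul, exp_zero, one_mul, mul_one, sub_self] at h
  simpa using hasDerivAt_iff_isLittleO.mp h

variable [NormOneClass 𝔸]

lemma norm_exp_smul_mul_exp_smul_pow_sub_exp_add_le (x y : 𝔸) (n : ℕ) :
    ‖(exp ((n + 1 : ℝ)⁻¹ • x) * exp ((n + 1 : ℝ)⁻¹ • y)) ^ (n + 1) - exp (x + y)‖ ≤
      Real.exp (‖x‖ + ‖y‖) * ((n + 1) *
        ‖exp ((n + 1 : ℝ)⁻¹ • x) * exp ((n + 1 : ℝ)⁻¹ • y) - exp ((n + 1 : ℝ)⁻¹ • (x + y))‖) := by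
  set c : ℝ := (n + 1 : ℝ)⁻¹
  set s := ‖x‖ + ‖y‖
  have hc : 0 < c := by positivity
  have hexp_le (z : 𝔸) : ‖exp (c • z)‖ ≤ Real.exp (c * ‖z‖) := by
    simpa [norm_smul, abs_of_pos hc] using norm_exp_le_exp_norm (c • z)
  have hprod : ‖exp (c • x) * exp (c • y)‖ ≤ Real.exp (c * s) :=
    calc ‖exp (c • x) * exp (c • y)‖ ≤ Real.exp (c * ‖x‖) * Real.exp (c * ‖y‖) :=
          (norm_mul_le _ _).trans
            (mul_le_mul (hexp_le x) (hexp_le y) (norm_nonneg _) (by positivity))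
      _ = Real.exp (c * s) := by rw [← Real.exp_add, mul_add]
  have hsum : ‖exp (c • (x + y))‖ ≤ Real.exp (c * s) :=
    (hexp_le _).trans (by gcongr; exact norm_add_le x y)
  have hpow : Real.exp (c * s) ^ n ≤ Real.exp s :=
    calc Real.exp (c * s) ^ n ≤ Real.exp (c * s) ^ (n + 1) :=
          pow_le_pow_right₀ (Real.one_le_exp (by positivity)) n.le_succ
      _ = Real.exp s := by
          rw [← Real.exp_nat_mul, ← mul_assoc]
          push_cast
          rw [mul_inv_cancel₀ (by positivity), one_mul]
  have hexp_add : exp (x + y) = exp (c • (x + y)) ^ (n + 1) := by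
    simpa [c] using (exp_inv_natCast_smul_pow n.succ_ne_zero (x + y)).symm
  rw [hexp_add]
  refine (norm_pow_succ_sub_pow_succ_le _ _ hprod hsum n).trans ?_
  calc (n + 1) * Real.exp (c * s) ^ n * _ ≤ (n + 1) * Real.exp s * _ := by gcongr
    _ = _ := by ring

theorem tendsto_exp_smul_mul_exp_smul_pow (x y : 𝔸) :
    Tendsto (fun n : ℕ => (exp ((n : ℝ)⁻¹ • x) * exp ((n : ℝ)⁻¹ • y)) ^ n) atTop
      (𝓝 (exp (x + y))) := by
  have hdefect : Tendsto (fun n : ℕ => (n : ℝ) *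
      ‖exp ((n : ℝ)⁻¹ • x) * exp ((n : ℝ)⁻¹ • y) - exp ((n : ℝ)⁻¹ • (x + y))‖) atTop (𝓝 0) := by
    simpa [norm_smul] using ((isLittleO_exp_smul_mul_exp_smul_sub_exp_smul_add x y).comp_tendsto
      (tendsto_inv_atTop_nhds_zero_nat (𝕜 := ℝ))).tendsto_inv_smul_nhds_zero.norm
  rw [← tendsto_add_atTop_iff_nat 1, tendsto_iff_norm_sub_tendsto_zero]
  refine squeeze_zero (fun _ => norm_nonneg _)
    (fun n => by exact_mod_cast norm_exp_smul_mul_exp_smul_pow_sub_exp_add_le x y n) ?_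
  simpa using (hdefect.comp (tendsto_add_atTop_nat 1)).const_mul (Real.exp (‖x‖ + ‖y‖))

end LieProductFormula

open scoped Matrix.Norms.L2Operator

lemma matFun_eq_cfc {D : ℕ} (f : ℝ → ℝ) {A : Matrix (Fin D) (Fin D) ℂ} (hA : A.IsHermitian) :
    matFun f A = cfc f A := by
  rw [hA.cfc_eq, IsHermitian.cfc, Unitary.conjStarAlgAut_apply, matFun, dif_pos hA]
  rfl

lemma matExp_eq_exp {D : ℕ} {A : Matrix (Fin D) (Fin D) ℂ} (hA : A.IsHermitian) :
    matExp A = exp A := by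
  rw [matExp, matFun_eq_cfc _ hA, CFC.real_exp_eq_normedSpace_exp hA.isSelfAdjoint]

theorem golden_thompson (D : ℕ) (H K : Matrix (Fin D) (Fin D) ℂ)
    (hH : H.IsHermitian) (hK : K.IsHermitian) :
    ((matExp (H + K)).trace).re ≤ ((matExp H * matExp K).trace).re := by
  rw [matExp_eq_exp (hH.add hK), matExp_eq_exp hH, matExp_eq_exp hK]
  -- The zero-dimensional matrix algebra has `‖1‖ = 0`, so Lie's formula is only used for `D ≠ 0`.
  rcases isEmpty_or_nonempty (Fin D) with _ | _
  · simp [Matrix.trace]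
  have hlim := (tendsto_exp_smul_mul_exp_smul_pow H K).comp
    (tendsto_pow_atTop_atTop_of_one_lt (one_lt_two (α := ℕ)))
  have hre_trace : Continuous fun A : Matrix (Fin D) (Fin D) ℂ => A.trace.re := by fun_prop
  refine le_of_tendsto ((hre_trace.tendsto _).comp hlim) (Eventually.of_forall fun k => ?_)
  set c : ℝ := ((2 ^ k : ℕ) : ℝ)⁻¹
  have hpow (A : Matrix (Fin D) (Fin D) ℂ) : exp (c • A) ^ 2 ^ k = exp A :=
    exp_inv_natCast_smul_pow (pow_ne_zero k two_ne_zero) A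
  have h := re_trace_mul_pow_two_pow_le k (hH.smul (IsSelfAdjoint.all c)).exp
    (hK.smul (IsSelfAdjoint.all c)).exp
  rwa [hpow, hpow] at h
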